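/- Let n ≥ 1 and D ≥ 3 be integers. The sequence β_p = −2^p·(p−1)·binom(n,p)·(D(D−1)/(D−2))^p, for 0 ≤ p ≤ n, satisfies β_0 = 1, β_1 = 0, and the cosmological constraint system: for every integer p with 0 ≤ p ≤ n−2, ((D−2)²/(2D²))·(p+1)·(p+2)·β_{p+2} − (2(D−1)(D−2)/D)·(p+1)·(n−p−1)·β_{p+1} + 2(D−1)²·(n−p)·(n−p−1)·β_p = 0. -/

import Mathlib

/-!
Put `r = 2D(D-1)/(D-2)`, so that the three coefficients of the system are `C/r²`, `2C/r` and `C`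
with `C = 2(D-1)²`. Writing `β_p = r^p b_p` the system therefore reduces to
`(p+1)(p+2) b_{p+2} - 2(p+1)(n-p-1) b_{p+1} + (n-p)(n-p-1) b_p = 0`, which for
`b_p = -(p-1) binom(n,p)` follows from `(p+1) binom(n,p+1) = (n-p) binom(n,p)`.
-/

theorem Nat.cast_choose_succ_mul {R : Type*} [CommRing R] (n p : ℕ) :
    (n.choose (p + 1) : R) * ((p : R) + 1) = n.choose p * ((n : R) - p) := by
  rcases le_or_gt p n with hp | hp
  · have h := congrArg (Nat.cast : ℕ → R) (Nat.choose_succ_right_eq n p)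
    push_cast [Nat.cast_sub hp] at h
    exact h
  · simp [Nat.choose_eq_zero_of_lt hp, Nat.choose_eq_zero_of_lt (Nat.lt_succ_of_lt hp)]

theorem choose_three_term_recurrence {R : Type*} [CommRing R] (n p : ℕ) :
    ((p : R) + 1) * ((p : R) + 2) * (-(((p + 2 : ℕ) : R) - 1) * n.choose (p + 2))
      - 2 * ((p : R) + 1) * ((n : R) - p - 1) * (-(((p + 1 : ℕ) : R) - 1) * n.choose (p + 1))
      + ((n : R) - p) * ((n : R) - p - 1) * (-((p : R) - 1) * n.choose p) = 0 := by
  have h₁ := Nat.cast_choose_succ_mul (R := R) n p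
  have h₂ := Nat.cast_choose_succ_mul (R := R) n (p + 1)
  push_cast at h₁ h₂ ⊢
  linear_combination (-((p : R) + 1) ^ 2) * h₂ + ((p : R) - 1) * ((n : R) - p - 1) * h₁

theorem three_term_of_scaled {R : Type*} [CommRing R] {A B C r : R} (hA : A * r ^ 2 = C)
    (hB : B * r = 2 * C) (n p : ℕ) (b : ℕ → R)
    (hb : ((p : R) + 1) * ((p : R) + 2) * b (p + 2) - 2 * ((p : R) + 1) * ((n : R) - p - 1) * b (p + 1)
      + ((n : R) - p) * ((n : R) - p - 1) * b p = 0) :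
    A * ((p : R) + 1) * ((p : R) + 2) * (r ^ (p + 2) * b (p + 2))
      - B * ((p : R) + 1) * ((n : R) - p - 1) * (r ^ (p + 1) * b (p + 1))
      + C * ((n : R) - p) * ((n : R) - p - 1) * (r ^ p * b p) = 0 := by
  linear_combination C * r ^ p * hb + ((p : R) + 1) * ((p : R) + 2) * r ^ p * b (p + 2) * hA
    - ((p : R) + 1) * ((n : R) - p - 1) * r ^ p * b (p + 1) * hB

theorem stmt_0 (n D : ℕ) (hD : 3 ≤ D) :
    let β : ℕ → ℝ := fun p =>
      -(2 : ℝ) ^ p * ((p : ℝ) - 1) * (n.choose p : ℝ) *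
        ((D : ℝ) * ((D : ℝ) - 1) / ((D : ℝ) - 2)) ^ p
    β 0 = 1 ∧ β 1 = 0 ∧
      ∀ p : ℕ, p + 2 ≤ n →
        ((D : ℝ) - 2) ^ 2 / (2 * (D : ℝ) ^ 2) * ((p : ℝ) + 1) * ((p : ℝ) + 2) * β (p + 2)
          - 2 * ((D : ℝ) - 1) * ((D : ℝ) - 2) / (D : ℝ) * ((p : ℝ) + 1) *
              ((n : ℝ) - (p : ℝ) - 1) * β (p + 1)
          + 2 * ((D : ℝ) - 1) ^ 2 * ((n : ℝ) - (p : ℝ)) * ((n : ℝ) - (p : ℝ) - 1) * β p = 0 := by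
  intro β
  refine ⟨by simp [β], by simp [β], fun p _ => ?_⟩
  have hD0 : (D : ℝ) ≠ 0 := by positivity
  have hD2 : (D : ℝ) - 2 ≠ 0 := by
    have : (3 : ℝ) ≤ D := by exact_mod_cast hD
    linarith
  set r : ℝ := 2 * ((D : ℝ) * ((D : ℝ) - 1) / ((D : ℝ) - 2))
  have hβ (q : ℕ) : β q = r ^ q * (-((q : ℝ) - 1) * n.choose q) := by
    simp only [β, r, mul_pow]
    ring
  rw [hβ, hβ, hβ]
  refine three_term_of_scaled ?_ ?_ n p (fun q => -((q : ℝ) - 1) * n.choose q)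
    (choose_three_term_recurrence n p) <;>
  · simp only [r]
    field_simp
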